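/- Let P be a probability measure on a measurable space Ω and let E, H be measurable events with P(E ∩ H) > 0, P(Eᶜ ∩ H) > 0, P(E ∩ Hᶜ) > 0 and P(Eᶜ ∩ Hᶜ) > 0. Let l, l′ be real numbers with 0 < l ≤ 1 and 0 < l′ ≤ 1, set r = l / l′, let Q_l be the single-likelihood Adams conditioning of P at (l, E, H), and let R be the single-likelihood Adams conditioning of the set function Q_l at (l′, E, Hᶜ). Then Bayesian conditioning of R on E gives the posterior probability of H: R⁰(H|E) = r·P(H) / (1 + (r − 1)·P(H)). -/

import Mathlib

open MeasureTheory Set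

variable {Ω : Type*} [MeasurableSpace Ω]

/-- Real-valued probability of an event. -/
noncomputable def pr (P : MeasureTheory.Measure Ω) : Set Ω → ℝ := fun A => (P A).toReal

/-- Conditional probability `Q⁰(A|B) = Q(A ∩ B)/Q(B)` of a set function (with `x/0 = 0`). -/
noncomputable def cond0 (Q : Set Ω → ℝ) (A B : Set Ω) : ℝ := Q (A ∩ B) / Q B

/-- Single-likelihood Adams conditioning of the set function `Q` at `(l, E, H)`. -/
noncomputable def slac (Q : Set Ω → ℝ) (l : ℝ) (E H : Set Ω) : Set Ω → ℝ :=
  fun x => Q (H ∩ E ∩ x) * (l / cond0 Q E H)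
    + Q (H ∩ Eᶜ ∩ x) * ((1 - l) / cond0 Q Eᶜ H)
    + Q (Hᶜ ∩ x)

/-- Double-likelihood Adams conditioning of the set function `Q` at `(l, l', E, H)`. -/
noncomputable def dlac (Q : Set Ω → ℝ) (l l' : ℝ) (E H : Set Ω) : Set Ω → ℝ :=
  fun x => Q (H ∩ E ∩ x) * (l / cond0 Q E H)
    + Q (H ∩ Eᶜ ∩ x) * ((1 - l) / cond0 Q Eᶜ H)
    + Q (Hᶜ ∩ E ∩ x) * (l' / cond0 Q E Hᶜ)
    + Q (Hᶜ ∩ Eᶜ ∩ x) * ((1 - l') / cond0 Q Eᶜ Hᶜ)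

/-!
Adams conditioning at `(l, E, H)` leaves a set function `Q` unchanged on subsets of `Hᶜ` and
gives `E ∩ H` the mass `l · Q(H)`. After conditioning at `(l, E, H)` and then at `(l', E, Hᶜ)`,
the event `E ∩ H` thus has mass `l · P(H)` and `E` has mass `l · P(H) + l' · (1 - P(H))`;
their ratio is the claimed posterior, `r = l / l'` being the ratio of the two likelihoods.
-/

section slac

variable {α : Type*} {Q : Set α → ℝ} {l : ℝ} {E H x : Set α}

theorem slac_of_subset_compl (hQ : Q ∅ = 0) (hx : x ⊆ Hᶜ) : slac Q l E H x = Q x := by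
  have hHx : ∀ F : Set α, H ∩ F ∩ x = ∅ := fun F =>
    eq_empty_of_subset_empty fun ω hω => hx hω.2 hω.1.1
  simp only [slac, hHx, hQ, zero_mul, zero_add, inter_eq_right.mpr hx]

theorem slac_inter_self (hQ : Q ∅ = 0) (hEH : Q (E ∩ H) ≠ 0) :
    slac Q l E H (E ∩ H) = l * Q H := by
  have h₁ : H ∩ E ∩ (E ∩ H) = E ∩ H := by rw [inter_comm H E, inter_self]
  have h₂ : H ∩ Eᶜ ∩ (E ∩ H) = ∅ := eq_empty_of_subset_empty fun ω hω => hω.1.2 hω.2.1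
  have h₃ : Hᶜ ∩ (E ∩ H) = ∅ := eq_empty_of_subset_empty fun ω hω => hω.1 hω.2.2
  simp only [slac, cond0, h₁, h₂, h₃, hQ, zero_mul, add_zero]
  field_simp

theorem slac_self (hQ : Q ∅ = 0) (hEH : Q (E ∩ H) ≠ 0) :
    slac Q l E H E = l * Q H + Q (E ∩ Hᶜ) := by
  have h₁ : H ∩ E ∩ E = E ∩ H := by rw [inter_assoc, inter_self, inter_comm]
  have h₂ : H ∩ Eᶜ ∩ E = ∅ := eq_empty_of_subset_empty fun ω hω => hω.1.2 hω.2
  simp only [slac, cond0, h₁, h₂, hQ, zero_mul, add_zero, inter_comm Hᶜ E]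
  field_simp

end slac

theorem pr_empty (P : Measure Ω) : pr P ∅ = 0 := by simp [pr]

theorem pr_compl (P : Measure Ω) [IsProbabilityMeasure P] {H : Set Ω} (hH : MeasurableSet H) :
    pr P Hᶜ = 1 - pr P H :=
  probReal_compl_eq_one_sub hH

theorem stmt_8_general (P : MeasureTheory.Measure Ω) [IsProbabilityMeasure P]
    (E H : Set Ω) (hH : MeasurableSet H)
    (hEH : 0 < pr P (E ∩ H))
    (hEHc : 0 < pr P (E ∩ Hᶜ))
    (l l' : ℝ) (hl'0 : 0 < l')
    (r : ℝ) (hr : r = l / l') :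
    cond0 (slac (slac (pr P) l E H) l' E Hᶜ) H E =
      r * pr P H / (1 + (r - 1) * pr P H) := by
  set Q := slac (pr P) l E H
  have hQ_compl : ∀ x ⊆ Hᶜ, Q x = pr P x := fun x hx => slac_of_subset_compl (pr_empty P) hx
  have hQ_empty : Q ∅ = 0 := (hQ_compl ∅ (empty_subset _)).trans (pr_empty P)
  have hQ_EH : Q (H ∩ E) = l * pr P H := by
    rw [inter_comm]; exact slac_inter_self (pr_empty P) hEH.ne'
  have hQ_EHc : Q (E ∩ Hᶜ) = pr P (E ∩ Hᶜ) := hQ_compl _ inter_subset_right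
  have hR_num : slac Q l' E Hᶜ (H ∩ E) = l * pr P H := by
    rw [slac_of_subset_compl hQ_empty (by rw [compl_compl]; exact inter_subset_left), hQ_EH]
  have hR_den : slac Q l' E Hᶜ E = l' * (1 - pr P H) + l * pr P H := by
    rw [slac_self hQ_empty (by rw [hQ_EHc]; exact hEHc.ne'), compl_compl, inter_comm, hQ_EH,
      hQ_compl _ subset_rfl, pr_compl P hH]
  rw [cond0, hR_num, hR_den, hr]
  have hden : 1 + (l / l' - 1) * pr P H = (l' * (1 - pr P H) + l * pr P H) / l' := by
    field_simp; ring
  -- `a / (D / l') = a * l' / D` also holds when `D = 0`, so `D` need not be shown positive.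
  rw [hden, div_div_eq_mul_div]
  field_simp

theorem stmt_8 (P : MeasureTheory.Measure Ω) [IsProbabilityMeasure P]
    (E H : Set Ω) (hE : MeasurableSet E) (hH : MeasurableSet H)
    (hEH : 0 < pr P (E ∩ H)) (hEcH : 0 < pr P (Eᶜ ∩ H))
    (hEHc : 0 < pr P (E ∩ Hᶜ)) (hEcHc : 0 < pr P (Eᶜ ∩ Hᶜ))
    (l l' : ℝ) (hl0 : 0 < l) (hl1 : l ≤ 1) (hl'0 : 0 < l') (hl'1 : l' ≤ 1)
    (r : ℝ) (hr : r = l / l') :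
    cond0 (slac (slac (pr P) l E H) l' E Hᶜ) H E =
      r * pr P H / (1 + (r - 1) * pr P H) :=
  stmt_8_general P E H hH hEH hEHc l l' hl'0 r hr
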